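/- Let ℬ be a ball-basis on (X, μ) and let r ≥ 0 and ϱ ≥ ρ > 0. The fractional maximal function 𝓜f(x) = sup_{B ∈ ℬ, x ∈ B} μ(B)^{−ρ} (∫_B ‖f‖_𝕌^r dμ)^ϱ satisfies the weak-type bound μ{x ∈ X : 𝓜f(x) > λ} ≤ (𝒦 / λ^{1/ρ}) (∫_X ‖f‖_𝕌^r dμ)^{ϱ/ρ} for all λ > 0. -/

import Mathlib

open MeasureTheory Set ENNReal NNReal

/-- A ball-basis on a measure space `(X, μ)`: a family of measurable sets of positive
finite measure satisfying conditions B1)-B4) of Karagulyan. -/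
structure BallBasis (X : Type*) [MeasurableSpace X] (μ : Measure X) where
  balls : Set (Set X)
  K : ℝ≥0
  K_pos : 0 < K
  measurableSet : ∀ B ∈ balls, MeasurableSet B
  measure_pos : ∀ B ∈ balls, 0 < μ B
  measure_lt_top : ∀ B ∈ balls, μ B < ∞
  exists_ball : ∀ x y : X, ∃ B ∈ balls, x ∈ B ∧ y ∈ B
  approx : ∀ E : Set X, MeasurableSet E → ∀ ε : ℝ≥0∞, 0 < ε →
      ∃ Bs : ℕ → Set X, (∀ k, Bs k ∈ balls) ∧ μ (symmDiff E (⋃ k, Bs k)) < ε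
  hull : Set X → Set X
  hull_mem : ∀ B ∈ balls, hull B ∈ balls
  star_subset_hull : ∀ B ∈ balls,
      (⋃₀ {A | A ∈ balls ∧ μ A ≤ 2 * μ B ∧ (A ∩ B).Nonempty}) ⊆ hull B
  measure_hull_le : ∀ B ∈ balls, μ (hull B) ≤ (K : ℝ≥0∞) * μ B

namespace BallBasis

variable {X : Type*} [MeasurableSpace X] {μ : Measure X}

/-- `B* = ⋃ {A ∈ ℬ : μ A ≤ 2 μ B, A ∩ B ≠ ∅}`. -/
def star (ℬ : BallBasis X μ) (B : Set X) : Set X :=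
  ⋃₀ {A | A ∈ ℬ.balls ∧ μ A ≤ 2 * μ B ∧ (A ∩ B).Nonempty}

/-- The doubling condition for a ball-basis, with doubling constant `η`. -/
def Doubling (ℬ : BallBasis X μ) (η : ℝ≥0) : Prop :=
  ∀ B ∈ ℬ.balls, ℬ.star B ≠ univ →
    ∃ B' ∈ ℬ.balls, B ⊂ B' ∧ μ B' ≤ (η : ℝ≥0∞) * μ B

end BallBasis

section Ops

variable {X : Type*} [MeasurableSpace X] {μ : Measure X}
variable {𝕌 : Type*} [NormedAddCommGroup 𝕌] {𝕍 : Type*} [NormedAddCommGroup 𝕍]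

/-- The fractional average `⟨f⟩_B = μ(B)^{-ρ} (∫_B ‖f‖^r)^ϱ`. -/
noncomputable def avg (μ : Measure X) (r ϱ ρ : ℝ) (f : X → 𝕌) (B : Set X) : ℝ≥0∞ :=
  (∫⁻ x in B, (‖f x‖₊ : ℝ≥0∞) ^ r ∂μ) ^ ϱ / (μ B) ^ ρ

/-- `⟨f⟩*_B = sup_{A ∈ ℬ, A ⊇ B} ⟨f⟩_A`. -/
noncomputable def avgStar {μ : Measure X} (ℬ : BallBasis X μ) (r ϱ ρ : ℝ)
    (f : X → 𝕌) (B : Set X) : ℝ≥0∞ :=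
  ⨆ A ∈ {A | A ∈ ℬ.balls ∧ B ⊆ A}, avg μ r ϱ ρ f A

/-- Essential oscillation `OSC_B(g) = esssup_{x,x' ∈ B} ‖g x - g x'‖`. -/
noncomputable def osc (μ : Measure X) (B : Set X) (g : X → 𝕍) : ℝ≥0∞ :=
  ⨅ (N : Set X) (_ : μ N = 0),
    ⨆ (x : X) (_ : x ∈ B \ N) (y : X) (_ : y ∈ B \ N), (‖g x - g y‖₊ : ℝ≥0∞)

/-- The fractional maximal function `𝓜 f(x) = sup_{B ∋ x} ⟨f⟩_B`. -/
noncomputable def maxFn {μ : Measure X} (ℬ : BallBasis X μ) (r ϱ ρ : ℝ)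
    (f : X → 𝕌) (x : X) : ℝ≥0∞ :=
  ⨆ B ∈ {B | B ∈ ℬ.balls ∧ x ∈ B}, avg μ r ϱ ρ f B

/-- Sublinearity of an operator. -/
def Sublinear (T : (X → 𝕌) → X → 𝕍) : Prop :=
  ∀ f g : X → 𝕌, ∀ x : X, ‖T (f + g) x‖ ≤ ‖T f x‖ + ‖T g x‖

/-- T0): weak type inequality with constant `L₀`. -/
def CondT0 {μ : Measure X} (ℬ : BallBasis X μ) (r ϱ ρ : ℝ)
    (T : (X → 𝕌) → X → 𝕍) (L₀ : ℝ≥0) : Prop :=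
  ∀ f : X → 𝕌, ∀ B ∈ ℬ.balls, ∀ lam : ℝ≥0∞, 0 < lam →
    μ {x | x ∈ B ∧ lam * avg μ r ϱ ρ f B < (‖T (B.indicator f) x‖₊ : ℝ≥0∞)} ≤
      ((L₀ : ℝ≥0∞) / lam) ^ (1 / ρ) * μ B

/-- T1): localization with constant `L₁`. -/
def CondT1 {μ : Measure X} (ℬ : BallBasis X μ) (r ϱ ρ : ℝ)
    (T : (X → 𝕌) → X → 𝕍) (L₁ : ℝ≥0) : Prop :=
  ∀ f : X → 𝕌, ∀ B ∈ ℬ.balls,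
    osc μ B (T ((ℬ.star B)ᶜ.indicator f)) ≤ (L₁ : ℝ≥0∞) * avgStar ℬ r ϱ ρ f B

/-- T2): connectivity with constant `L₂`. -/
def CondT2 {μ : Measure X} (ℬ : BallBasis X μ) (r ϱ ρ : ℝ)
    (T : (X → 𝕌) → X → 𝕍) (L₂ : ℝ≥0) : Prop :=
  ∀ A ∈ ℬ.balls, ℬ.star A ≠ univ → ∃ B ∈ ℬ.balls, A ⊂ B ∧ ∀ f : X → 𝕌,
    essSup (fun x => (‖T ((ℬ.star B \ ℬ.star A).indicator f) x‖₊ : ℝ≥0∞)) (μ.restrict A) ≤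
      (L₂ : ℝ≥0∞) * avg μ r ϱ ρ f (ℬ.star B)

/-- A bounded oscillation (BO) operator with constants `L₀, L₁, L₂`. -/
structure IsBO {μ : Measure X} (ℬ : BallBasis X μ) (r ϱ ρ : ℝ)
    (T : (X → 𝕌) → X → 𝕍) (L₀ L₁ L₂ : ℝ≥0) : Prop where
  sublinear : Sublinear T
  t0 : CondT0 ℬ r ϱ ρ T L₀
  t1 : CondT1 ℬ r ϱ ρ T L₁
  t2 : CondT2 ℬ r ϱ ρ T L₂

/-- `Δ(A,B) = sup_{x ∈ A, f ≠ 0} ‖T(f·1_{B*∖A*})(x)‖ / ⟨f⟩_{B*}`. -/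
noncomputable def Delta {μ : Measure X} (ℬ : BallBasis X μ) (r ϱ ρ : ℝ)
    (T : (X → 𝕌) → X → 𝕍) (A B : Set X) : ℝ≥0∞ :=
  ⨆ (f : X → 𝕌) (x : X) (_ : x ∈ A),
    (‖T ((ℬ.star B \ ℬ.star A).indicator f) x‖₊ : ℝ≥0∞) / avg μ r ϱ ρ f (ℬ.star B)

/-- A `γ`-ball: a set sandwiched between two balls of comparable measure. -/
def IsGammaBall {μ : Measure X} (ℬ : BallBasis X μ) (γ : ℝ≥0) (E : Set X) : Prop :=
  ∃ B₁ ∈ ℬ.balls, ∃ B₂ ∈ ℬ.balls, B₁ ⊆ E ∧ E ⊆ B₂ ∧ μ B₂ ≤ (γ : ℝ≥0∞) * μ B₁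

/-- The truncated operator `T* f(x) = sup_{B ∋ x} ‖T(f·1_{X∖B*})(x)‖`, ENNReal-valued. -/
noncomputable def TstarE {μ : Measure X} (ℬ : BallBasis X μ)
    (T : (X → 𝕌) → X → 𝕍) (f : X → 𝕌) (x : X) : ℝ≥0∞ :=
  ⨆ B ∈ {B | B ∈ ℬ.balls ∧ x ∈ B}, (‖T ((ℬ.star B)ᶜ.indicator f) x‖₊ : ℝ≥0∞)

/-- `φ(A) = inf {μ B : B ∈ ℬ, B ⊋ A}`. -/
noncomputable def phi {μ : Measure X} (ℬ : BallBasis X μ) (A : Set X) : ℝ≥0∞ :=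
  ⨅ B ∈ {B | B ∈ ℬ.balls ∧ A ⊂ B}, μ B

end Ops

/-! A Vitali covering argument. Every ball `B` with `⟨f⟩_B > λ` satisfies
`μ B ≤ (∫_B ‖f‖^r)^{ϱ/ρ} / λ^{1/ρ}`, so these balls have uniformly bounded measure and the
abstract Vitali lemma (enlargement factor `2` in measure) selects a disjoint subfamily whose
hulls cover their union, which is the superlevel set of `𝓜 f`. The selected balls carry positive
mass of the finite measure `‖f‖^r μ`, hence are countably many, and since `ϱ / ρ ≥ 1`,
`∑ (∫_D ‖f‖^r)^{ϱ/ρ} ≤ (∑ ∫_D ‖f‖^r)^{ϱ/ρ} ≤ (∫_X ‖f‖^r)^{ϱ/ρ}`. -/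

namespace BallBasis

variable {X : Type*} [MeasurableSpace X] {μ : Measure X} (ℬ : BallBasis X μ)

theorem subset_hull {A B : Set X} (hA : A ∈ ℬ.balls) (hB : B ∈ ℬ.balls)
    (hAB : (A ∩ B).Nonempty) (hμ : μ A ≤ 2 * μ B) : A ⊆ ℬ.hull B :=
  fun _ hx => ℬ.star_subset_hull B hB ⟨A, ⟨hA, hμ, hAB⟩, hx⟩

theorem exists_disjoint_subfamily_subset_biUnion_hull {𝒞 : Set (Set X)} (h𝒞 : 𝒞 ⊆ ℬ.balls)
    {R : ℝ≥0∞} (hR : R ≠ ∞) (hμR : ∀ B ∈ 𝒞, μ B ≤ R) :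
    ∃ 𝒟 ⊆ 𝒞, 𝒟.PairwiseDisjoint id ∧ ⋃₀ 𝒞 ⊆ ⋃ D ∈ 𝒟, ℬ.hull D := by
  have hfin : ∀ B ∈ 𝒞, μ B ≠ ∞ := fun B hB => (ℬ.measure_lt_top B (h𝒞 hB)).ne
  obtain ⟨𝒟, h𝒟𝒞, hdisj, hcover⟩ := Vitali.exists_disjoint_subfamily_covering_enlargement id 𝒞
    (fun B => (μ B).toReal) 2 one_lt_two (fun _ _ => ENNReal.toReal_nonneg) R.toReal
    (fun B hB => ENNReal.toReal_mono hR (hμR B hB))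
    (fun B hB => nonempty_of_measure_ne_zero (ℬ.measure_pos B (h𝒞 hB)).ne')
  refine ⟨𝒟, h𝒟𝒞, hdisj, sUnion_subset fun B hB => ?_⟩
  obtain ⟨D, hD, hBD, hμBD⟩ := hcover B hB
  have hμ : μ B ≤ 2 * μ D := by
    rwa [← ENNReal.toReal_le_toReal (hfin B hB) (mul_ne_top ofNat_ne_top (hfin D (h𝒟𝒞 hD))),
      ENNReal.toReal_mul, ENNReal.toReal_ofNat]
  exact (ℬ.subset_hull (h𝒞 hB) (h𝒞 (h𝒟𝒞 hD)) hBD hμ).trans (subset_biUnion_of_mem hD)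

theorem measure_biUnion_hull_le {𝒟 : Set (Set X)} (h𝒟 : 𝒟 ⊆ ℬ.balls) (hc : 𝒟.Countable) :
    μ (⋃ D ∈ 𝒟, ℬ.hull D) ≤ ℬ.K * ∑' D : 𝒟, μ D :=
  calc μ (⋃ D ∈ 𝒟, ℬ.hull D) ≤ ∑' D : 𝒟, μ (ℬ.hull D) := measure_biUnion_le μ hc _
    _ ≤ ∑' D : 𝒟, ℬ.K * μ D :=
      ENNReal.tsum_le_tsum fun D => ℬ.measure_hull_le D (h𝒟 D.2)
    _ = ℬ.K * ∑' D : 𝒟, μ D := ENNReal.tsum_mul_left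

end BallBasis

theorem Set.PairwiseDisjoint.countable_of_measure_pos {X : Type*} [MeasurableSpace X]
    {ν : Measure X} [SFinite ν] {𝒟 : Set (Set X)} (hd : 𝒟.PairwiseDisjoint id)
    (hm : ∀ D ∈ 𝒟, MeasurableSet D) (hpos : ∀ D ∈ 𝒟, 0 < ν D) : 𝒟.Countable := by
  have := Measure.countable_meas_pos_of_disjoint_iUnion (μ := ν) (As := fun D : 𝒟 => (D : Set X))
    (fun D => hm D D.2) (fun D E hDE => hd D.2 E.2 (Subtype.coe_injective.ne hDE))
  rw [← Set.countable_coe_iff, ← Set.countable_univ_iff]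
  simpa [hpos] using this

theorem tsum_setLIntegral_le_lintegral {X : Type*} [MeasurableSpace X] {μ : Measure X}
    {𝒟 : Set (Set X)} (hc : 𝒟.Countable) (hd : 𝒟.PairwiseDisjoint id)
    (hm : ∀ D ∈ 𝒟, MeasurableSet D) (g : X → ℝ≥0∞) :
    ∑' D : 𝒟, ∫⁻ x in D, g x ∂μ ≤ ∫⁻ x, g x ∂μ := by
  rw [← lintegral_biUnion hc hm hd]
  exact setLIntegral_le_lintegral _ _

theorem ENNReal.tsum_rpow_le_rpow_tsum {ι : Type*} (a : ι → ℝ≥0∞) {p : ℝ} (hp : 1 ≤ p) :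
    ∑' i, a i ^ p ≤ (∑' i, a i) ^ p := by
  have hsplit (x : ℝ≥0∞) : x ^ p = x * x ^ (p - 1) := by
    simpa using ENNReal.rpow_add_of_nonneg (x := x) 1 (p - 1) zero_le_one (by linarith)
  calc ∑' i, a i ^ p = ∑' i, a i * a i ^ (p - 1) := by simp only [hsplit]
    _ ≤ ∑' i, a i * (∑' j, a j) ^ (p - 1) := by
      gcongr with i
      exact ENNReal.le_tsum i
    _ = (∑' i, a i) ^ p := by rw [ENNReal.tsum_mul_right, hsplit]

section MaximalFunction

variable {X : Type*} [MeasurableSpace X] {μ : Measure X} {𝕌 : Type*} [NormedAddCommGroup 𝕌]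
  {r ϱ ρ : ℝ} {f : X → 𝕌} {B : Set X} {lam : ℝ≥0∞}

theorem setLIntegral_pos_of_lt_avg (hϱ : 0 < ϱ) (h : lam < avg μ r ϱ ρ f B) :
    0 < ∫⁻ x in B, (‖f x‖₊ : ℝ≥0∞) ^ r ∂μ := by
  rw [pos_iff_ne_zero]
  intro hJ
  simp [avg, hJ, ENNReal.zero_rpow_of_pos hϱ] at h

theorem measure_le_of_lt_avg (hρ : 0 < ρ) (hlam : lam ≠ 0) (hB₀ : μ B ≠ 0) (hB : μ B ≠ ∞)
    (h : lam < avg μ r ϱ ρ f B) :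
    μ B ≤ (∫⁻ x in B, (‖f x‖₊ : ℝ≥0∞) ^ r ∂μ) ^ (ϱ / ρ) / lam ^ (1 / ρ) := by
  set J := ∫⁻ x in B, (‖f x‖₊ : ℝ≥0∞) ^ r ∂μ
  have hmul : lam * μ B ^ ρ ≤ J ^ ϱ := by
    rw [avg, ENNReal.lt_div_iff_mul_lt (Or.inl (ENNReal.rpow_pos (pos_iff_ne_zero.2 hB₀) hB).ne')
      (Or.inl (ENNReal.rpow_ne_top_of_nonneg hρ.le hB))] at h
    exact h.le
  have hroot : lam ^ (1 / ρ) * μ B ≤ J ^ (ϱ / ρ) := by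
    have := ENNReal.rpow_le_rpow hmul (one_div_nonneg.2 hρ.le)
    rwa [ENNReal.mul_rpow_of_nonneg _ _ (one_div_nonneg.2 hρ.le), ← ENNReal.rpow_mul,
      ← ENNReal.rpow_mul, mul_one_div_cancel hρ.ne', ENNReal.rpow_one, mul_one_div] at this
  rw [ENNReal.le_div_iff_mul_le (Or.inl (ENNReal.rpow_pos (pos_iff_ne_zero.2 hlam) h.ne_top).ne')
    (Or.inl (ENNReal.rpow_ne_top_of_nonneg (one_div_nonneg.2 hρ.le) h.ne_top)), mul_comm]
  exact hroot

theorem setOf_lt_maxFn_eq_sUnion (ℬ : BallBasis X μ) :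
    {x | lam < maxFn ℬ r ϱ ρ f x} = ⋃₀ {B | B ∈ ℬ.balls ∧ lam < avg μ r ϱ ρ f B} := by
  ext x
  simp only [maxFn, lt_iSup_iff, mem_sUnion, mem_ofPred_eq, exists_prop]
  tauto

theorem BallBasis.exists_disjoint_balls_measure_setOf_lt_maxFn_le (ℬ : BallBasis X μ)
    (hρ : 0 < ρ) (hϱ : 0 < ϱ) (hlam : lam ≠ 0)
    (hf : ∫⁻ x, (‖f x‖₊ : ℝ≥0∞) ^ r ∂μ ≠ ∞) :
    ∃ 𝒟 ⊆ {B | B ∈ ℬ.balls ∧ lam < avg μ r ϱ ρ f B}, 𝒟.Countable ∧ 𝒟.PairwiseDisjoint id ∧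
      μ {x | lam < maxFn ℬ r ϱ ρ f x} ≤ ℬ.K * ∑' D : 𝒟, μ D := by
  set g : X → ℝ≥0∞ := fun x => (‖f x‖₊ : ℝ≥0∞) ^ r
  have hR : (∫⁻ x, g x ∂μ) ^ (ϱ / ρ) / lam ^ (1 / ρ) ≠ ∞ :=
    ENNReal.div_ne_top (ENNReal.rpow_ne_top_of_nonneg (by positivity) hf)
      (ENNReal.rpow_pos_of_nonneg (pos_iff_ne_zero.2 hlam) (by positivity)).ne'
  obtain ⟨𝒟, h𝒟𝒞, hdisj, hcover⟩ :=
    ℬ.exists_disjoint_subfamily_subset_biUnion_hull (sep_subset _ _) hR fun B hB =>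
      (measure_le_of_lt_avg hρ hlam (ℬ.measure_pos B hB.1).ne' (ℬ.measure_lt_top B hB.1).ne
        hB.2).trans (by gcongr; exact Measure.restrict_le_self)
  have hm : ∀ D ∈ 𝒟, MeasurableSet D := fun D hD => ℬ.measurableSet D (h𝒟𝒞 hD).1
  have : IsFiniteMeasure (μ.withDensity g) := isFiniteMeasure_withDensity hf
  have hc : 𝒟.Countable := hdisj.countable_of_measure_pos (ν := μ.withDensity g) hm
    fun D hD => by
      rw [withDensity_apply _ (hm D hD)]
      exact setLIntegral_pos_of_lt_avg hϱ (h𝒟𝒞 hD).2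
  refine ⟨𝒟, h𝒟𝒞, hc, hdisj, ?_⟩
  calc μ {x | lam < maxFn ℬ r ϱ ρ f x} ≤ μ (⋃ D ∈ 𝒟, ℬ.hull D) := by
        rw [setOf_lt_maxFn_eq_sUnion]
        exact measure_mono hcover
    _ ≤ ℬ.K * ∑' D : 𝒟, μ D := ℬ.measure_biUnion_hull_le (fun D hD => (h𝒟𝒞 hD).1) hc

end MaximalFunction

theorem maxFn_weak_type_general {X : Type*} [MeasurableSpace X] {μ : Measure X}
    (ℬ : BallBasis X μ) {𝕌 : Type*} [NormedAddCommGroup 𝕌]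
    (r ϱ ρ : ℝ) (hρ : 0 < ρ) (hϱρ : ρ ≤ ϱ)
    (f : X → 𝕌) (lam : ℝ≥0∞) (hlam : 0 < lam) :
    μ {x | lam < maxFn ℬ r ϱ ρ f x} ≤
      (ℬ.K : ℝ≥0∞) / lam ^ (1 / ρ) * (∫⁻ x, (‖f x‖₊ : ℝ≥0∞) ^ r ∂μ) ^ (ϱ / ρ) := by
  set g : X → ℝ≥0∞ := fun x => (‖f x‖₊ : ℝ≥0∞) ^ r
  have hϱ : 0 < ϱ := hρ.trans_le hϱρ
  rcases eq_or_ne lam ∞ with rfl | hlam_top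
  · simp
  rcases eq_or_ne (∫⁻ x, g x ∂μ) ∞ with hf_top | hf_top
  · have hK : (ℬ.K : ℝ≥0∞) / lam ^ (1 / ρ) ≠ 0 := (ENNReal.div_pos (by exact_mod_cast ℬ.K_pos.ne')
      (ENNReal.rpow_ne_top_of_nonneg (one_div_nonneg.2 hρ.le) hlam_top)).ne'
    rw [hf_top, ENNReal.top_rpow_of_pos (div_pos hϱ hρ), ENNReal.mul_top hK]
    exact le_top
  obtain ⟨𝒟, h𝒟, hc, hdisj, hμ⟩ :=
    ℬ.exists_disjoint_balls_measure_setOf_lt_maxFn_le hρ hϱ hlam.ne' hf_top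
  have hm : ∀ D ∈ 𝒟, MeasurableSet D := fun D hD => ℬ.measurableSet D (h𝒟 hD).1
  calc μ {x | lam < maxFn ℬ r ϱ ρ f x} ≤ ℬ.K * ∑' D : 𝒟, μ D := hμ
    _ ≤ ℬ.K * ∑' D : 𝒟, (∫⁻ x in D, g x ∂μ) ^ (ϱ / ρ) / lam ^ (1 / ρ) := by
        gcongr with D
        exact measure_le_of_lt_avg hρ hlam.ne' (ℬ.measure_pos D (h𝒟 D.2).1).ne'
          (ℬ.measure_lt_top D (h𝒟 D.2).1).ne (h𝒟 D.2).2
    _ = ℬ.K / lam ^ (1 / ρ) * ∑' D : 𝒟, (∫⁻ x in D, g x ∂μ) ^ (ϱ / ρ) := by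
        simp only [div_eq_mul_inv, ENNReal.tsum_mul_right]
        ring
    _ ≤ ℬ.K / lam ^ (1 / ρ) * (∑' D : 𝒟, ∫⁻ x in D, g x ∂μ) ^ (ϱ / ρ) := by
        gcongr
        exact ENNReal.tsum_rpow_le_rpow_tsum _ ((one_le_div hρ).2 hϱρ)
    _ ≤ ℬ.K / lam ^ (1 / ρ) * (∫⁻ x, g x ∂μ) ^ (ϱ / ρ) := by
        gcongr
        exact tsum_setLIntegral_le_lintegral hc hdisj hm g

/-- Weak-type bound for the fractional maximal function associated with a ball-basis. -/
theorem maxFn_weak_type {X : Type*} [MeasurableSpace X] {μ : Measure X}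
    (ℬ : BallBasis X μ) {𝕌 : Type*} [NormedAddCommGroup 𝕌]
    (r ϱ ρ : ℝ) (hr : 0 ≤ r) (hρ : 0 < ρ) (hϱρ : ρ ≤ ϱ)
    (f : X → 𝕌) (lam : ℝ≥0∞) (hlam : 0 < lam) :
    μ {x | lam < maxFn ℬ r ϱ ρ f x} ≤
      (ℬ.K : ℝ≥0∞) / lam ^ (1 / ρ) * (∫⁻ x, (‖f x‖₊ : ℝ≥0∞) ^ r ∂μ) ^ (ϱ / ρ) :=
  maxFn_weak_type_general ℬ r ϱ ρ hρ hϱρ f lam hlam
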